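/- Let ‖·‖ be a semi-norm on ℝʳ (the Thurston norm on H¹(M;ℝ)), let β : {1,…,r} → ℤ be given (relative Bennequin numbers), and suppose: (a) for each standard basis vector e⁽ⁱ⁾, ‖e⁽ⁱ⁾‖ = β(i) ≥ 0 and β(i) ≤ ‖e⁽ⁱ⁾‖, and (b) ∑ᵢ β(i) = ‖∑ᵢ e⁽ⁱ⁾‖. Then for every C = (C₁,…,C_r) with Cᵢ ≥ 0, we have ∑ᵢ Cᵢβ(i) = ‖C‖. -/

import Mathlib

/-!
A seminorm is subadditive and absolutely homogeneous, so on nonnegative combinations of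
fixed vectors `vᵢ` it is bounded above by the linear functional `c ↦ ∑ cᵢ p(vᵢ)`.
If this bound is attained at `c = (1,…,1)`, it is attained everywhere on the orthant:
for `M ≥ cᵢ` split `M • ∑ vᵢ = ∑ cᵢ • vᵢ + ∑ (M - cᵢ) • vᵢ`; the left side has
seminorm `M ∑ p(vᵢ)`, which is the sum of the upper bounds of the two pieces, so
neither bound can be strict.
-/

namespace Seminorm

variable {E ι : Type*} [AddCommGroup E] [Module ℝ E] (p : Seminorm ℝ E) (s : Finset ι)
  (v : ι → E)

theorem map_sum_smul_le {c : ι → ℝ} (hc : ∀ i ∈ s, 0 ≤ c i) :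
    p (∑ i ∈ s, c i • v i) ≤ ∑ i ∈ s, c i * p (v i) :=
  calc p (∑ i ∈ s, c i • v i) ≤ ∑ i ∈ s, p (c i • v i) :=
        Finset.le_sum_of_subadditive p (map_zero p).le (map_add_le_add p) _ _
    _ = ∑ i ∈ s, c i * p (v i) := Finset.sum_congr rfl fun i hi => by
        rw [map_smul_eq_mul, Real.norm_of_nonneg (hc i hi)]

theorem map_sum_smul_of_map_sum_eq (hadd : p (∑ i ∈ s, v i) = ∑ i ∈ s, p (v i))
    {c : ι → ℝ} (hc : ∀ i ∈ s, 0 ≤ c i) :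
    p (∑ i ∈ s, c i • v i) = ∑ i ∈ s, c i * p (v i) := by
  set M := ∑ i ∈ s, c i
  have hM : 0 ≤ M := Finset.sum_nonneg hc
  have hcM : ∀ i ∈ s, 0 ≤ M - c i := fun i hi =>
    sub_nonneg.2 (Finset.single_le_sum hc hi)
  have hsplit : M • ∑ i ∈ s, v i = ∑ i ∈ s, c i • v i + ∑ i ∈ s, (M - c i) • v i := by
    rw [Finset.smul_sum, ← Finset.sum_add_distrib]
    exact Finset.sum_congr rfl fun i _ => by rw [← add_smul, add_sub_cancel]
  have hrest_sum : ∑ i ∈ s, (M - c i) * p (v i) =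
      M * ∑ i ∈ s, p (v i) - ∑ i ∈ s, c i * p (v i) := by
    rw [Finset.mul_sum, ← Finset.sum_sub_distrib]
    exact Finset.sum_congr rfl fun i _ => by ring
  have hwhole : M * ∑ i ∈ s, p (v i) ≤
      p (∑ i ∈ s, c i • v i) + p (∑ i ∈ s, (M - c i) • v i) :=
    calc M * ∑ i ∈ s, p (v i) = p (M • ∑ i ∈ s, v i) := by
          rw [map_smul_eq_mul, Real.norm_of_nonneg hM, hadd]
      _ ≤ _ := hsplit ▸ map_add_le_add p _ _
  linarith [p.map_sum_smul_le s v hc, p.map_sum_smul_le s v hcM]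

end Seminorm

theorem seminorm_eq_linear_of_eq_at_basis_and_ones_general (r : ℕ)
    (p : Seminorm ℝ (Fin r → ℝ)) (β : Fin r → ℤ)
    (hβ : ∀ i, p (Pi.single i (1 : ℝ)) = (β i : ℝ))
    (hsum : (∑ i, (β i : ℝ)) = p (∑ i, Pi.single i (1 : ℝ)))
    (C : Fin r → ℝ) (hC : ∀ i, 0 ≤ C i) :
    ∑ i, C i * (β i : ℝ) = p (∑ i, C i • (Pi.single i (1 : ℝ) : Fin r → ℝ)) := by
  simp only [← hβ] at hsum ⊢
  exact (p.map_sum_smul_of_map_sum_eq _ _ hsum.symm fun i _ => hC i).symm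

/-- If the relative Bennequin inequality is an equality at each basis point and at
`(1,…,1)`, then the semi-norm (Thurston norm) equals the linear functional
`∑ Cᵢ β(i)` on the nonnegative orthant. -/
theorem seminorm_eq_linear_of_eq_at_basis_and_ones (r : ℕ)
    (p : Seminorm ℝ (Fin r → ℝ)) (β : Fin r → ℤ)
    (hβ : ∀ i, p (Pi.single i (1 : ℝ)) = (β i : ℝ)) (hβ0 : ∀ i, 0 ≤ β i)
    (hsum : (∑ i, (β i : ℝ)) = p (∑ i, Pi.single i (1 : ℝ)))
    (C : Fin r → ℝ) (hC : ∀ i, 0 ≤ C i) :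
    ∑ i, C i * (β i : ℝ) = p (∑ i, C i • (Pi.single i (1 : ℝ) : Fin r → ℝ)) :=
  seminorm_eq_linear_of_eq_at_basis_and_ones_general r p β hβ hsum C hC
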